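/- arXiv:2302.01009 — 2 statements merged into one kernel-verified Lean document; each statement's English description precedes it below -/
import Mathlib

section
/- For every natural number m there exists an integer n > 0 such that f^n(m,1,1,0) = (m+1,1,1,0). -/
/-!
Write `(a, x, 1, 0) ⟶* (a, x + 1, 1, 1)` for "the orbit counts `x` up by one at level `a`".
This holds at every level, by induction on `a`. At level `a + 1` the orbit first trades
the counter `b` for `c = 2 ^ b` and drops to `(a, 2 ^ b, 1, 0)`. There it keeps counting up
by the induction hypothesis, each time falling back to `d = 0` through rule (6), until the
counter reaches the power of two `2 ^ (b + 1)`. Rule (5) then climbs back to level `a + 1`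
with `c = 2 ^ (b + 1)`, and rule (4) turns this `c` into the counter `b + 1`.
For `b = 0` this gives `(m, 1, 1, 0) ⟶* (m + 1, 1, 1, 1)`, and one application of rule (6)
finishes the proof.
-/

/-- Conditions I-III defining the set V of 4-tuples (a,b,c,d). -/
def inV : ℕ × ℕ × ℕ × ℕ → Prop :=
  fun ⟨a, b, c, d⟩ =>
    (∃ k, c = 2 ^ k) ∧ (d = 0 ∨ d = 1) ∧ (a > 0 → b = 0 → c > 1) ∧ (a = 0 → c = 1)

open Classical in
/-- The function f defined by the six rules. -/
noncomputable def f : ℕ × ℕ × ℕ × ℕ → ℕ × ℕ × ℕ × ℕ :=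
  fun ⟨a, b, c, d⟩ =>
    if d = 0 then
      if a > 0 then
        if b > 0 then (a, b - 1, 2 * c, 0)
        else (a - 1, c, 1, 0)
      else (0, b + 1, 1, 1)
    else
      if c > 1 then (a, b + 1, c / 2, 1)
      else if ∃ k > 0, b = 2 ^ k then (a + 1, 0, b, 1)
      else (a, b, 1, 0)

open Relation

theorem exists_pos_iterate_eq_of_transGen {α : Type*} {g : α → α} {x y : α}
    (h : TransGen (fun a b => g a = b) x y) : ∃ n, 0 < n ∧ g^[n] x = y := by
  induction h with
  | single hxy => exact ⟨1, one_pos, hxy⟩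
  | tail _ hyz ih =>
    obtain ⟨n, -, hn⟩ := ih
    exact ⟨n + 1, n.succ_pos, by rw [Function.iterate_succ_apply', hn, hyz]⟩

theorem not_exists_eq_two_pow_of_lt_of_lt {b x : ℕ} (h₁ : 2 ^ b < x) (h₂ : x < 2 ^ (b + 1)) :
    ¬ ∃ k, x = 2 ^ k := by
  rintro ⟨k, rfl⟩
  have hbk := (Nat.pow_lt_pow_iff_right (by norm_num)).mp h₁
  have hkb := (Nat.pow_lt_pow_iff_right (by norm_num)).mp h₂
  omega

def Step (p q : ℕ × ℕ × ℕ × ℕ) : Prop := f p = q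

local notation:50 x " ⟶* " y => ReflTransGen Step x y

theorem step_count_down (a b c : ℕ) : Step (a + 1, b + 1, c, 0) (a + 1, b, 2 * c, 0) := by
  simp [Step, f]

theorem step_lower (a c : ℕ) : Step (a + 1, 0, c, 0) (a, c, 1, 0) := by
  simp [Step, f]

theorem step_start (b c : ℕ) : Step (0, b, c, 0) (0, b + 1, 1, 1) := by
  simp [Step, f]

theorem step_halve (a b c : ℕ) (hc : 1 < c) : Step (a, b, c, 1) (a, b + 1, c / 2, 1) := by
  simp [Step, f, hc]

theorem step_raise (a k : ℕ) (hk : 0 < k) : Step (a, 2 ^ k, 1, 1) (a + 1, 0, 2 ^ k, 1) := by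
  simp [Step, f, hk.ne']

theorem step_restart (a b : ℕ) (hb : ¬ ∃ k > 0, b = 2 ^ k) :
    Step (a, b, 1, 1) (a, b, 1, 0) := by
  simp [Step, f, hb]

theorem reach_lower (a b c : ℕ) : (a + 1, b, c, 0) ⟶* (a, 2 ^ b * c, 1, 0) := by
  induction b generalizing c with
  | zero => simpa using ReflTransGen.single (step_lower a c)
  | succ b ih =>
    refine ReflTransGen.head (step_count_down a b c) ?_
    rw [pow_succ, mul_assoc]
    exact ih (2 * c)

theorem reach_halve (a b k : ℕ) : (a, b, 2 ^ k, 1) ⟶* (a, b + k, 1, 1) := by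
  induction k generalizing b with
  | zero => exact ReflTransGen.refl
  | succ k ih =>
    have hstep : Step (a, b, 2 ^ (k + 1), 1) (a, b + 1, 2 ^ k, 1) := by
      simpa [pow_succ] using step_halve a b _ (Nat.one_lt_two_pow k.succ_ne_zero)
    refine ReflTransGen.head hstep ?_
    rw [← add_assoc, add_right_comm]
    exact ih (b + 1)

theorem reach_raise (a b : ℕ) (hcount : ∀ x, (a, x, 1, 0) ⟶* (a, x + 1, 1, 1)) :
    (a, 2 ^ b, 1, 0) ⟶* (a + 1, b + 1, 1, 1) := by
  have hclimb : (a, 2 ^ (b + 1), 1, 1) ⟶* (a + 1, b + 1, 1, 1) := by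
    simpa using ReflTransGen.head (step_raise a (b + 1) b.succ_pos) (reach_halve (a + 1) 0 (b + 1))
  have hpow : 2 ^ (b + 1) = 2 * 2 ^ b := by ring
  -- Induction on the number `t + 1` of counting rounds left before the counter hits `2 ^ (b + 1)`.
  have hrun : ∀ t x, 2 ^ b ≤ x → x + t + 1 = 2 ^ (b + 1) →
      (a, x, 1, 0) ⟶* (a, 2 ^ (b + 1), 1, 1) := by
    intro t
    induction t with
    | zero =>
      rintro x - hx
      simpa [← hx] using hcount x
    | succ t ih =>
      intro x hbx hx
      have hnot : ¬ ∃ k > 0, x + 1 = 2 ^ k := fun ⟨k, _, hk⟩ =>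
        not_exists_eq_two_pow_of_lt_of_lt (b := b) (by omega) (by omega) ⟨k, hk⟩
      exact (hcount x).trans
        (ReflTransGen.head (step_restart a _ hnot) (ih (x + 1) (by omega) (by omega)))
  have hone := @Nat.one_le_two_pow b
  exact (hrun (2 ^ b - 1) (2 ^ b) le_rfl (by omega)).trans hclimb

theorem reach_count (a x : ℕ) : (a, x, 1, 0) ⟶* (a, x + 1, 1, 1) := by
  induction a generalizing x with
  | zero => exact ReflTransGen.single (step_start x 1)
  | succ a ih =>
    have hlower := reach_lower a x 1
    rw [mul_one] at hlower
    exact hlower.trans (reach_raise a x ih)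

theorem stmt_5 : ∀ m : ℕ, ∃ n : ℕ, 0 < n ∧ f^[n] (m, 1, 1, 0) = (m + 1, 1, 1, 0) := by
  intro m
  have hnot : ¬ ∃ k > 0, 1 = 2 ^ k := fun ⟨k, hk, h⟩ => by
    have := Nat.one_lt_two_pow hk.ne'
    omega
  have hraise : (m, 1, 1, 0) ⟶* (m + 1, 1, 1, 1) := by
    simpa using reach_raise m 0 (reach_count m)
  exact exists_pos_iterate_eq_of_transGen (TransGen.tail' hraise (step_restart (m + 1) 1 hnot))
end

section
/- For every pair u, v ∈ V there exist natural numbers r, s, and m such that f^r(u) = f^s(v) = (m,1,1,0). In other words, any two elements of V eventually merge under iteration of f at a tuple of the form (m,1,1,0). -/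
/-
Call `(0, B, 1, 0)` a rest state. Rules 1–2 turn `(a + 1, b, 1, 0)` into `(a, 2 ^ b, 1, 0)`, and
rules 5 and 4 turn `(a, 2 ^ k, 1, 1)` into `(a + 1, k, 1, 1)`; by strong induction on `b`, the orbit
of `(a, b, 1, 1)` therefore hits the rest state `(0, t, 1, 0)`, where `t` is `b` under a tower of
`a` twos. Hence every element of `V` reaches a rest state, and `(0, B, 1, 0)` reaches
`(0, B + 1, 1, 0)` through `(0, B + 1, 1, 1)`, so any two orbits meet in a common rest state.
From `(0, B, 1, 0)`, climbing to `(0, T, 1, 1)` with `T` a tower of `B` twos and taking `B`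
logarithms gives `(B, 1, 1, 1)`, and rule 6 gives `(B, 1, 1, 0)`.
-/

def Reaches {α : Type*} (g : α → α) (x y : α) : Prop := ∃ n, g^[n] x = y

namespace Reaches

variable {α : Type*} {g : α → α} {x y z : α}

theorem refl (x : α) : Reaches g x x := ⟨0, rfl⟩

theorem single (h : g x = y) : Reaches g x y := ⟨1, h⟩

theorem trans : Reaches g x y → Reaches g y z → Reaches g x z
  | ⟨m, hm⟩, ⟨n, hn⟩ => ⟨n + m, by rw [Function.iterate_add_apply, hm, hn]⟩

instance : Trans (Reaches g) (Reaches g) (Reaches g) := ⟨trans⟩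

end Reaches

infix:50 " ⇝ " => Reaches f

section Rules

variable (a b c : ℕ)

theorem f_countdown (ha : 0 < a) : f (a, b + 1, c, 0) = (a, b, 2 * c, 0) := by
  simp [f, ha]

theorem f_borrow : f (a + 1, 0, c, 0) = (a, c, 1, 0) := by
  simp [f]

theorem f_zero_left : f (0, b, c, 0) = (0, b + 1, 1, 1) := by
  simp [f]

theorem f_halve (hc : 0 < c) : f (a, b, 2 * c, 1) = (a, b + 1, c, 1) := by
  simp [f, show 1 < 2 * c by omega]

theorem f_two_pow {k : ℕ} (hk : 0 < k) : f (a, 2 ^ k, 1, 1) = (a + 1, 0, 2 ^ k, 1) := by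
  simp [f, hk.ne']

theorem f_not_two_pow (hb : ¬∃ k > 0, b = 2 ^ k) : f (a, b, 1, 1) = (a, b, 1, 0) := by
  simp [f, hb]

end Rules

theorem reaches_countdown {a : ℕ} (ha : 0 < a) (b c : ℕ) :
    (a, b, c, 0) ⇝ (a, 0, 2 ^ b * c, 0) := by
  induction b generalizing c with
  | zero => simpa using Reaches.refl _
  | succ b ih =>
    calc (a, b + 1, c, 0) ⇝ (a, b, 2 * c, 0) := .single (f_countdown a b c ha)
      _ ⇝ (a, 0, 2 ^ (b + 1) * c, 0) := by simpa [pow_succ, mul_assoc] using ih (2 * c)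

theorem reaches_borrow (a b c : ℕ) : (a + 1, b, c, 0) ⇝ (a, 2 ^ b * c, 1, 0) :=
  (reaches_countdown a.succ_pos b c).trans (.single (f_borrow a _))

theorem reaches_halve (a b k : ℕ) : (a, b, 2 ^ k, 1) ⇝ (a, b + k, 1, 1) := by
  induction k generalizing b with
  | zero => exact Reaches.refl _
  | succ k ih =>
    calc (a, b, 2 ^ (k + 1), 1) ⇝ (a, b + 1, 2 ^ k, 1) := by
          rw [pow_succ']; exact .single (f_halve a b _ (Nat.two_pow_pos k))
      _ ⇝ (a, b + (k + 1), 1, 1) := by simpa [add_assoc, add_comm 1] using ih (b + 1)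

theorem reaches_log (a : ℕ) {k : ℕ} (hk : 0 < k) : (a, 2 ^ k, 1, 1) ⇝ (a + 1, k, 1, 1) := by
  simpa using (Reaches.single (f_two_pow a hk)).trans (reaches_halve (a + 1) 0 k)

theorem reaches_descend (a b : ℕ) : (a, b, 1, 0) ⇝ (0, (2 ^ ·)^[a] b, 1, 0) := by
  induction a generalizing b with
  | zero => exact Reaches.refl _
  | succ a ih =>
    simpa [Function.iterate_succ_apply] using (reaches_borrow a b 1).trans (ih (2 ^ b * 1))

theorem reaches_descend_of_flag (a b : ℕ) : (a, b, 1, 1) ⇝ (0, (2 ^ ·)^[a] b, 1, 0) := by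
  induction b using Nat.strong_induction_on generalizing a with
  | _ b ih =>
    by_cases hb : ∃ k > 0, b = 2 ^ k
    · obtain ⟨k, hk, rfl⟩ := hb
      calc (a, 2 ^ k, 1, 1) ⇝ (a + 1, k, 1, 1) := reaches_log a hk
        _ ⇝ (0, (2 ^ ·)^[a] (2 ^ k), 1, 0) := ih k Nat.lt_two_pow_self (a + 1)
    · exact (Reaches.single (f_not_two_pow a b hb)).trans (reaches_descend a b)

theorem reaches_rest_succ (B : ℕ) : (0, B, 1, 0) ⇝ (0, B + 1, 1, 0) :=
  (Reaches.single (f_zero_left B 1)).trans (reaches_descend_of_flag 0 (B + 1))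

theorem reaches_rest_of_le {B B' : ℕ} (h : B ≤ B') : (0, B, 1, 0) ⇝ (0, B', 1, 0) := by
  induction B', h using Nat.le_induction with
  | base => exact Reaches.refl _
  | succ B' _ ih => exact ih.trans (reaches_rest_succ B')

theorem add_le_iterate_two_pow (m b : ℕ) : m + b ≤ (2 ^ ·)^[m] b := by
  induction m with
  | zero => simp
  | succ m ih =>
    rw [Function.iterate_succ_apply']
    have := Nat.lt_two_pow_self (n := (2 ^ ·)^[m] b)
    omega

theorem reaches_log_iterate (a m : ℕ) {b : ℕ} (hb : 0 < b) :
    (a, (2 ^ ·)^[m] b, 1, 1) ⇝ (a + m, b, 1, 1) := by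
  induction m generalizing a with
  | zero => exact Reaches.refl _
  | succ m ih =>
    have hpos : 0 < (2 ^ ·)^[m] b := by have := add_le_iterate_two_pow m b; omega
    rw [Function.iterate_succ_apply']
    simpa [add_assoc, add_comm 1] using (reaches_log a hpos).trans (ih (a + 1))

theorem reaches_merge (B : ℕ) : (0, B, 1, 0) ⇝ (B, 1, 1, 0) := by
  set T := (2 ^ ·)^[B] 1
  have hBT : B + 1 ≤ T := add_le_iterate_two_pow B 1
  calc (0, B, 1, 0) ⇝ (0, T - 1, 1, 0) := reaches_rest_of_le (by omega)
    _ ⇝ (0, T, 1, 1) := .single (by rw [f_zero_left, Nat.sub_add_cancel (by omega)])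
    _ ⇝ (B, 1, 1, 1) := by simpa using reaches_log_iterate 0 B Nat.one_pos
    _ ⇝ (B, 1, 1, 0) := .single (f_not_two_pow B 1 fun ⟨k, hk, h⟩ => by
          have := Nat.one_lt_two_pow hk.ne'; omega)

theorem exists_reaches_rest {u : ℕ × ℕ × ℕ × ℕ} (hu : inV u) :
    ∃ B, u ⇝ (0, B, 1, 0) := by
  obtain ⟨a, b, c, d⟩ := u
  obtain ⟨⟨e, rfl⟩, hd | rfl, -, hc⟩ := hu
  · subst hd
    cases a with
    | zero => exact ⟨b, by rw [hc rfl]; exact Reaches.refl _⟩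
    | succ a => exact ⟨_, (reaches_borrow a b _).trans (reaches_descend a _)⟩
  · exact ⟨_, (reaches_halve a b e).trans (reaches_descend_of_flag a _)⟩

theorem stmt_7 : ∀ u v : ℕ × ℕ × ℕ × ℕ, inV u → inV v →
    ∃ r s m : ℕ, f^[r] u = (m, 1, 1, 0) ∧ f^[s] v = (m, 1, 1, 0) := by
  intro u v hu hv
  obtain ⟨Bu, hBu⟩ := exists_reaches_rest hu
  obtain ⟨Bv, hBv⟩ := exists_reaches_rest hv
  have hmerge (B : ℕ) (hB : B ≤ max Bu Bv) : (0, B, 1, 0) ⇝ (max Bu Bv, 1, 1, 0) :=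
    (reaches_rest_of_le hB).trans (reaches_merge _)
  obtain ⟨r, hr⟩ := hBu.trans (hmerge Bu (le_max_left _ _))
  obtain ⟨s, hs⟩ := hBv.trans (hmerge Bv (le_max_right _ _))
  exact ⟨r, s, max Bu Bv, hr, hs⟩
end
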